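/- arXiv:1703.08995 — 4 statements merged into one kernel-verified Lean document; each statement's English description precedes it below -/
import Mathlib

section
/- If I ∈ ℝ^{q×(p+1)} has full column rank p+1 and its first column is the all-ones vector, and b ∈ ℝ^q, then the function f(β̃) = log(∑_{i=1}^q e^{b_i} exp((𝙸β̃)_i)) is strictly convex on ℝ^p, where 𝙸 is I with its first column removed. -/
/-!
The function is log-sum-exp composed with the affine map `β ↦ b + 𝙸 β`. Shifting `x` by
`logSumExp x` turns `exp ∘ x` into a probability vector, so strict convexity of `exp` applied
coordinatewise gives strict convexity of log-sum-exp between any two points whose difference is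
not a constant vector. Since the first column of `I` is all ones, `𝙸 (β₁ - β₂) = c • 1` says
`I (-c, β₁ - β₂) = 0`, and injectivity of `I` forces `β₁ = β₂`.
-/

open Finset Real Matrix

section LogSumExp

variable {ι : Type*} [Fintype ι]

noncomputable def logSumExp (x : ι → ℝ) : ℝ := log (∑ i, exp (x i))

theorem sum_exp_sub_logSumExp [Nonempty ι] (x : ι → ℝ) :
    ∑ i, exp (x i - logSumExp x) = 1 := by
  have hpos : 0 < ∑ i, exp (x i) := sum_pos (fun i _ => exp_pos _) univ_nonempty
  simp_rw [exp_sub, ← sum_div, logSumExp, exp_log hpos, div_self hpos.ne']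

theorem logSumExp_lt_of_sum_exp_sub_lt [Nonempty ι] {x : ι → ℝ} {t : ℝ}
    (h : ∑ i, exp (x i - t) < 1) : logSumExp x < t := by
  have hpos : 0 < ∑ i, exp (x i) := sum_pos (fun i _ => exp_pos _) univ_nonempty
  simp_rw [exp_sub, ← sum_div, div_lt_one (exp_pos t)] at h
  exact (log_lt_iff_lt_exp hpos).2 h

theorem logSumExp_smul_add_smul_lt {x y : ι → ℝ} (hxy : ∀ c : ℝ, ∃ i, x i - y i ≠ c)
    {a b : ℝ} (ha : 0 < a) (hb : 0 < b) (hab : a + b = 1) :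
    logSumExp (a • x + b • y) < a * logSumExp x + b * logSumExp y := by
  obtain ⟨i₀, hi₀⟩ := hxy (logSumExp x - logSumExp y)
  have : Nonempty ι := ⟨i₀⟩
  apply logSumExp_lt_of_sum_exp_sub_lt
  set u : ι → ℝ := fun i => x i - logSumExp x
  set v : ι → ℝ := fun i => y i - logSumExp y
  have hcombo : ∀ i, (a • x + b • y) i - (a * logSumExp x + b * logSumExp y)
      = a • u i + b • v i := fun i => by
        simp only [Pi.add_apply, Pi.smul_apply, smul_eq_mul, u, v]; ring
  have hle : ∀ i ∈ univ, exp (a • u i + b • v i) ≤ a • exp (u i) + b • exp (v i) :=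
    fun i _ => strictConvexOn_exp.convexOn.2 trivial trivial ha.le hb.le hab
  have hlt : ∃ i ∈ univ, exp (a • u i + b • v i) < a • exp (u i) + b • exp (v i) :=
    ⟨i₀, mem_univ _, strictConvexOn_exp.2 trivial trivial
      (fun h => hi₀ (by simp only [u, v] at h; linarith)) ha hb hab⟩
  calc ∑ i, exp ((a • x + b • y) i - (a * logSumExp x + b * logSumExp y))
      = ∑ i, exp (a • u i + b • v i) := by simp_rw [hcombo]
    _ < ∑ i, (a • exp (u i) + b • exp (v i)) := sum_lt_sum hle hlt
    _ = 1 := by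
      simp only [smul_eq_mul, sum_add_distrib, ← mul_sum, u, v, sum_exp_sub_logSumExp, hab,
        mul_one]

theorem strictConvexOn_logSumExp_add_mulVec {κ : Type*} [Fintype κ] (A : Matrix ι κ ℝ)
    (b : ι → ℝ) (hA : ∀ β ≠ 0, ∀ c : ℝ, ∃ i, (A *ᵥ β) i ≠ c) :
    StrictConvexOn ℝ Set.univ fun β => logSumExp (b + A *ᵥ β) := by
  refine ⟨convex_univ, fun β₁ _ β₂ _ hne s t hs ht hst => ?_⟩
  have hcombo : b + A *ᵥ (s • β₁ + t • β₂) = s • (b + A *ᵥ β₁) + t • (b + A *ᵥ β₂) := by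
    conv_lhs => rw [← Convex.combo_self hst b]
    rw [mulVec_add, mulVec_smul, mulVec_smul]
    module
  simp only [hcombo, smul_eq_mul]
  refine logSumExp_smul_add_smul_lt (fun c => ?_) hs ht hst
  obtain ⟨i, hi⟩ := hA _ (sub_ne_zero.2 hne) c
  exact ⟨i, by simpa [mulVec_sub] using hi⟩

end LogSumExp

theorem Matrix.exists_submatrix_succ_mulVec_ne {R : Type*} [Ring R] {p q : ℕ}
    {I : Matrix (Fin q) (Fin (p + 1)) R} (hrank : Function.Injective I.mulVec)
    (hones : ∀ i, I i 0 = 1) {β : Fin p → R} (hβ : β ≠ 0) (c : R) :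
    ∃ i, (I.submatrix id Fin.succ *ᵥ β) i ≠ c := by
  by_contra! h
  apply hβ
  have hker : I *ᵥ Fin.cons (-c) β = I *ᵥ 0 := by
    funext i
    have hi : ∑ j, I i j.succ * β j = c := h i
    simp [mulVec, dotProduct, Fin.sum_univ_succ, hones, hi]
  exact congrArg Fin.tail (hrank hker)

/-- If `I` is a real `q × (p+1)` matrix of full column rank whose first column is all ones,
and `b ∈ ℝ^q`, then `f(β̃) = log (∑ i, e^{b i} exp ((𝙸 β̃) i))` is strictly convex on `ℝ^p`,
where `𝙸` is `I` with its first column removed. -/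
theorem f_strictConvex (p q : ℕ) (I : Matrix (Fin q) (Fin (p + 1)) ℝ)
    (hrank : Function.Injective I.mulVec)
    (hones : ∀ i, I i 0 = 1) (b : Fin q → ℝ) :
    StrictConvexOn ℝ Set.univ
      (fun β : Fin p → ℝ =>
        Real.log (∑ i, Real.exp (b i) * Real.exp (∑ j : Fin p, I i j.succ * β j))) := by
  have hf : (fun β : Fin p → ℝ =>
        Real.log (∑ i, Real.exp (b i) * Real.exp (∑ j : Fin p, I i j.succ * β j)))
      = fun β => logSumExp (b + I.submatrix id Fin.succ *ᵥ β) := by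
    funext β
    simp only [logSumExp, ← exp_add]
    rfl
  rw [hf]
  exact strictConvexOn_logSumExp_add_mulVec _ b fun β hβ =>
    exists_submatrix_succ_mulVec_ne hrank hones hβ
end

section
/- The binary logistic regression problem with binary full-rank design matrices I₁ ∈ {0,1}^{q₁×(p+1)} and I₀ ∈ {0,1}^{q₀×(p+1)} satisfies the Silvapulle overlap condition (the open cones C₁ = {I₁^T u : u ∈ (ℝ₊*)^{q₁}} and C₀ = {I₀^T u : u ∈ (ℝ₊*)^{q₀}} intersect) if and only if there exist vectors of positive integers n⁺ ∈ (ℕ*)^{q₁} and n* ∈ (ℕ*)^{q₀} with I₁^T n⁺ = I₀^T n*. -/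
/-!
A `ℚ`-linear functional `ℓ : ℝ → ℚ` commutes with matrices whose entries are rational, so applying
it coordinatewise to a positive real solution `(u₁, u₀)` of `I₁ᵀ u₁ = I₀ᵀ u₀` yields a rational
solution, which is positive as soon as `ℓ` is positive at the finitely many coordinates of `u₁, u₀`.
Such an `ℓ` exists: for a Hamel basis `b` of `ℝ` over `ℚ`, the functional sending `b` to weights `s`
depends continuously on `s` at these finitely many points and is the identity for `s = b`, so
rational weights close to `b` work. Clearing denominators then gives positive integers.
-/

open Set Matrix

lemma exists_linearMap_rat_pos {ν : Type*} [Finite ν] (x : ν → ℝ) (hx : ∀ t, 0 < x t) :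
    ∃ ℓ : ℝ →ₗ[ℚ] ℚ, ∀ t, 0 < ℓ (x t) := by
  let b := Module.Basis.ofVectorSpace ℚ ℝ
  -- `F s t` is `b.constr` with real weights `s`, evaluated at `x t`
  let F : (_ → ℝ) → ν → ℝ := fun s t => (b.repr (x t)).sum fun β c => (c : ℝ) * s β
  have hF : Continuous F := continuous_pi fun t =>
    continuous_finsetSum _ fun β _ => continuous_const.mul (continuous_apply β)
  have hFb : F b = x := by
    funext t
    conv_rhs => rw [← b.linearCombination_repr (x t)]
    simp [F, Finsupp.linearCombination_apply, Rat.smul_def]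
  have hU : IsOpen (F ⁻¹' pi univ fun _ => Ioi 0) :=
    (isOpen_set_pi finite_univ fun _ _ => isOpen_Ioi).preimage hF
  obtain ⟨r, hr⟩ := (DenseRange.piMap fun _ => Rat.denseRange_cast).exists_mem_open hU
    ⟨b, by rw [mem_preimage, hFb]; exact fun t _ => hx t⟩
  refine ⟨b.constr ℚ r, fun t => ?_⟩
  have : (0 : ℝ) < (b.constr ℚ r (x t) : ℚ) := by
    simpa [F, b.constr_apply, Finsupp.sum] using hr t (mem_univ _)
  exact_mod_cast this

lemma exists_nat_mul_eq_natCast {ν : Type*} [Fintype ν] (q : ν → ℚ) (hq : ∀ t, 0 < q t) :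
    ∃ N : ℕ, ∃ n : ν → ℕ, (∀ t, 0 < n t) ∧ ∀ t, (N : ℚ) * q t = n t := by
  set N := ∏ s, (q s).den
  have hdvd : ∀ t, (q t).den ∣ N := fun t => Finset.dvd_prod_of_mem _ (Finset.mem_univ t)
  have hN : 0 < N := Finset.prod_pos fun s _ => (q s).den_pos
  have hnum : ∀ t, 0 < (q t).num := fun t => Rat.num_pos.2 (hq t)
  refine ⟨N, fun t => N / (q t).den * (q t).num.toNat, fun t => ?_, fun t => ?_⟩
  · have := hnum t
    exact Nat.mul_pos (Nat.div_pos (Nat.le_of_dvd hN (hdvd t)) (q t).den_pos) (by omega)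
  · rw [Nat.cast_mul, Nat.cast_div (hdvd t) (Nat.cast_ne_zero.2 (q t).den_ne_zero),
      ← Int.cast_natCast (q t).num.toNat, Int.toNat_of_nonneg (hnum t).le]
    conv_lhs => rw [← Rat.num_div_den (q t)]
    ring

lemma exists_linearMap_rat_eq_natCast {ν : Type*} [Fintype ν] (x : ν → ℝ) (hx : ∀ t, 0 < x t) :
    ∃ (ℓ : ℝ →ₗ[ℚ] ℚ) (n : ν → ℕ), (∀ t, 0 < n t) ∧ ∀ t, ℓ (x t) = n t := by
  obtain ⟨ℓ, hℓ⟩ := exists_linearMap_rat_pos x hx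
  obtain ⟨N, n, hn, hN⟩ := exists_nat_mul_eq_natCast (ℓ ∘ x) hℓ
  exact ⟨(N : ℚ) • ℓ, n, hn, hN⟩

lemma Matrix.mulVec_algebraMap_comp_linearMap {R S μ ν : Type*} [CommSemiring R]
    [CommSemiring S] [Algebra R S] [Fintype ν] (ℓ : S →ₗ[R] R) (A : Matrix μ ν S)
    (hA : ∀ i j, A i j ∈ Set.range (algebraMap R S)) (x : ν → S) :
    A *ᵥ (fun t => algebraMap R S (ℓ (x t))) = fun j => algebraMap R S (ℓ ((A *ᵥ x) j)) := by
  funext j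
  simp only [mulVec, dotProduct, map_sum]
  refine Finset.sum_congr rfl fun t _ => ?_
  obtain ⟨r, hr⟩ := hA j t
  rw [← hr, ← Algebra.smul_def r (x t), ℓ.map_smul, smul_eq_mul, map_mul]

theorem silvapulle_binary_general (p q0 q1 : ℕ)
    (I1 : Matrix (Fin q1) (Fin (p + 1)) ℝ) (I0 : Matrix (Fin q0) (Fin (p + 1)) ℝ)
    (hb1 : ∀ i j, I1 i j = 0 ∨ I1 i j = 1) (hb0 : ∀ i j, I0 i j = 0 ∨ I0 i j = 1) :
    (∃ u1 : Fin q1 → ℝ, ∃ u0 : Fin q0 → ℝ,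
        (∀ i, 0 < u1 i) ∧ (∀ i, 0 < u0 i) ∧
        I1.transpose.mulVec u1 = I0.transpose.mulVec u0) ↔
    (∃ nplus : Fin q1 → ℕ, ∃ nstar : Fin q0 → ℕ,
        (∀ i, 0 < nplus i) ∧ (∀ i, 0 < nstar i) ∧
        I1.transpose.mulVec (fun i => (nplus i : ℝ)) =
          I0.transpose.mulVec (fun i => (nstar i : ℝ))) := by
  refine ⟨fun ⟨u1, u0, hu1, hu0, heq⟩ => ?_, fun ⟨n1, n0, hn1, hn0, heq⟩ =>
    ⟨_, _, fun i => Nat.cast_pos.2 (hn1 i), fun i => Nat.cast_pos.2 (hn0 i), heq⟩⟩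
  have hrat : ∀ a : ℝ, a = 0 ∨ a = 1 → a ∈ Set.range (algebraMap ℚ ℝ) := by
    rintro a (rfl | rfl)
    exacts [⟨0, map_zero _⟩, ⟨1, map_one _⟩]
  obtain ⟨ℓ, n, hn, hℓ⟩ :=
    exists_linearMap_rat_eq_natCast (Sum.elim u1 u0) (Sum.forall.2 ⟨hu1, hu0⟩)
  have hcast : ∀ t, (n t : ℝ) = algebraMap ℚ ℝ (ℓ (Sum.elim u1 u0 t)) := fun t => by simp [hℓ]
  refine ⟨n ∘ Sum.inl, n ∘ Sum.inr, fun i => hn _, fun i => hn _, ?_⟩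
  simp only [Function.comp_apply, hcast, Sum.elim_inl, Sum.elim_inr]
  rw [I1ᵀ.mulVec_algebraMap_comp_linearMap ℓ fun i j => hrat _ (hb1 j i),
    I0ᵀ.mulVec_algebraMap_comp_linearMap ℓ fun i j => hrat _ (hb0 j i), heq]

/-- Silvapulle's overlap condition for binary design matrices: the open positive cones
`C₁ = {I₁ᵀ u : u > 0}` and `C₀ = {I₀ᵀ u : u > 0}` intersect if and only if there exist
vectors of positive integers `n⁺, n*` with `I₁ᵀ n⁺ = I₀ᵀ n*`. -/
theorem silvapulle_binary (p q0 q1 : ℕ)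
    (I1 : Matrix (Fin q1) (Fin (p + 1)) ℝ) (I0 : Matrix (Fin q0) (Fin (p + 1)) ℝ)
    (hb1 : ∀ i j, I1 i j = 0 ∨ I1 i j = 1) (hb0 : ∀ i j, I0 i j = 0 ∨ I0 i j = 1)
    (hr1 : Function.Injective I1.mulVec) (hr0 : Function.Injective I0.mulVec) :
    (∃ u1 : Fin q1 → ℝ, ∃ u0 : Fin q0 → ℝ,
        (∀ i, 0 < u1 i) ∧ (∀ i, 0 < u0 i) ∧
        I1.transpose.mulVec u1 = I0.transpose.mulVec u0) ↔
    (∃ nplus : Fin q1 → ℕ, ∃ nstar : Fin q0 → ℕ,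
        (∀ i, 0 < nplus i) ∧ (∀ i, 0 < nstar i) ∧
        I1.transpose.mulVec (fun i => (nplus i : ℝ)) =
          I0.transpose.mulVec (fun i => (nstar i : ℝ))) :=
  silvapulle_binary_general p q0 q1 I1 I0 hb1 hb0
end

section
/- Let I be a full-rank q×(p+1) real matrix whose first column is all ones, 𝙸 its last p columns, n̄⁰ ∈ (ℝ₊*)^q with ∑ n̄⁰_i = 1, and m ∈ ℝ^p. If there exists λ ∈ (ℝ₊*)^q with ∑_i λ_i = 1 and 𝙸^T λ = m, then the function β̃ ↦ log(∑_i n̄⁰_i e^{(𝙸β̃)_i}) − m·β̃ is coercive on ℝ^p (it tends to +∞ as ‖β̃‖ → ∞). -/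
/-! Write `𝙸 = I.submatrix id Fin.succ` and `aᵢ(β) = (𝙸β)ᵢ - m ⬝ᵥ β`. Keeping one term of the sum,
the objective is at least `log n̄⁰ᵢ + aᵢ(β)` for every `i`, so it suffices that `maxᵢ aᵢ(β) ≥ ε‖β‖`.
The `λ`-weighted mean of the `aᵢ(β)` vanishes, so one of them is positive unless all are zero; and
all are zero only if `I (-(m ⬝ᵥ β), β) = 0`, i.e. `β = 0` as `I` has full rank. Compactness of the
unit sphere and homogeneity make the positivity of `maxᵢ aᵢ` a linear lower bound. -/

open Matrix Finset

theorem exists_pos_of_dotProduct_eq_zero {ι : Type*} [Fintype ι] {w v : ι → ℝ}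
    (hw : ∀ i, 0 < w i) (hwv : w ⬝ᵥ v = 0) (hv : v ≠ 0) : ∃ i, 0 < v i := by
  obtain ⟨i, hi⟩ := Function.ne_iff.mp hv
  obtain ⟨j, -, hj⟩ := exists_pos_of_sum_zero_of_exists_nonzero (fun i => w i * v i) hwv
    ⟨i, mem_univ i, mul_ne_zero (hw i).ne' hi⟩
  exact ⟨j, pos_of_mul_pos_right hj (hw j).le⟩

section PositiveDependence

variable {ι E : Type*} [Fintype ι] [NormedAddCommGroup E] [NormedSpace ℝ E]
  {A : E →ₗ[ℝ] ι → ℝ} {w : ι → ℝ}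

theorem LinearMap.exists_pos_apply_of_dotProduct_eq_zero (hw : ∀ i, 0 < w i)
    (hwA : ∀ x, w ⬝ᵥ A x = 0) (hA : Function.Injective A) {x : E} (hx : x ≠ 0) :
    ∃ i, 0 < A x i :=
  exists_pos_of_dotProduct_eq_zero hw (hwA x) ((map_ne_zero_iff A hA).mpr hx)

theorem LinearMap.exists_mul_norm_le_apply_of_dotProduct_eq_zero [Nonempty ι]
    [FiniteDimensional ℝ E] (hw : ∀ i, 0 < w i) (hwA : ∀ x, w ⬝ᵥ A x = 0)
    (hA : Function.Injective A) : ∃ ε > 0, ∀ x, ∃ i, ε * ‖x‖ ≤ A x i := by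
  cases subsingleton_or_nontrivial E
  · exact ⟨1, one_pos, fun x => ⟨Classical.arbitrary ι, by simp [Subsingleton.elim x 0]⟩⟩
  set g : E → ℝ := fun x => univ.sup' univ_nonempty (A x ·)
  have hg : Continuous g := Continuous.finset_sup'_apply _ fun i _ =>
    (continuous_apply i).comp A.continuous_of_finiteDimensional
  have hgA (x : E) : ∃ i, g x = A x i := by
    obtain ⟨i, -, hi⟩ := exists_mem_eq_sup' univ_nonempty (A x ·)
    exact ⟨i, hi⟩
  obtain ⟨u, hu, hmin⟩ := (isCompact_sphere (0 : E) 1).exists_isMinOn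
    (NormedSpace.sphere_nonempty.mpr zero_le_one) hg.continuousOn
  have hu0 : u ≠ 0 := ne_zero_of_mem_unit_sphere ⟨u, hu⟩
  refine ⟨g u, ?_, fun x => ?_⟩
  · obtain ⟨i, hi⟩ := A.exists_pos_apply_of_dotProduct_eq_zero hw hwA hA hu0
    exact hi.trans_le (le_sup' (A u ·) (mem_univ i))
  rcases eq_or_ne x 0 with rfl | hx
  · exact ⟨Classical.arbitrary ι, by simp⟩
  have hx' : ‖x‖⁻¹ • x ∈ Metric.sphere (0 : E) 1 := by
    simp [norm_smul, hx]
  obtain ⟨i, hi⟩ := hgA (‖x‖⁻¹ • x)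
  refine ⟨i, ?_⟩
  calc g u * ‖x‖ ≤ g (‖x‖⁻¹ • x) * ‖x‖ := by gcongr; exact hmin hx'
    _ = A x i := by
      rw [hi, map_smul, Pi.smul_apply, smul_eq_mul, mul_comm, ← mul_assoc,
        mul_inv_cancel₀ (norm_ne_zero_iff.mpr hx), one_mul]

end PositiveDependence

theorem Real.log_add_le_log_sum_mul_exp {ι : Type*} [Fintype ι] {c : ι → ℝ} (hc : ∀ i, 0 < c i)
    (t : ι → ℝ) (j : ι) : Real.log (c j) + t j ≤ Real.log (∑ i, c i * Real.exp (t i)) := by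
  rw [← Real.log_exp (t j), ← Real.log_mul (hc j).ne' (Real.exp_pos _).ne']
  have hterm (i : ι) : 0 < c i * Real.exp (t i) := mul_pos (hc i) (Real.exp_pos _)
  exact Real.log_le_log (hterm j) <|
    single_le_sum (f := fun i => c i * Real.exp (t i)) (fun i _ => (hterm i).le) (mem_univ j)

theorem Matrix.mulVec_cons_of_col_zero_eq_one {R ι : Type*} [CommRing R] {p : ℕ}
    {I : Matrix ι (Fin (p + 1)) R} (hones : ∀ i, I i 0 = 1) (c : R) (x : Fin p → R) :
    I *ᵥ Fin.cons c x = Function.const _ c + I.submatrix id Fin.succ *ᵥ x := by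
  ext i
  simp [mulVec, dotProduct, Fin.sum_univ_succ, hones]

theorem Matrix.vecMul_sub_replicateRow_eq_zero {R ι κ : Type*} [CommRing R] [Fintype ι]
    {B : Matrix ι κ R} {w : ι → R} {v : κ → R} (hw : ∑ i, w i = 1) (hwB : w ᵥ* B = v) :
    w ᵥ* (B - replicateRow ι v) = 0 := by
  rw [vecMul_sub, hwB, sub_eq_zero]
  ext j
  simp [vecMul, dotProduct, replicateRow, ← sum_mul, hw]

theorem Matrix.injective_mulVec_submatrix_succ_sub_replicateRow {R ι : Type*} [CommRing R]
    {p : ℕ} {I : Matrix ι (Fin (p + 1)) R} (hI : Function.Injective I.mulVec)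
    (hones : ∀ i, I i 0 = 1) (v : Fin p → R) :
    Function.Injective (I.submatrix id Fin.succ - replicateRow ι v).mulVec := by
  refine (injective_iff_map_eq_zero (mulVecLin _)).mpr fun x hx => ?_
  have hcons : I *ᵥ Fin.cons (-(v ⬝ᵥ x)) x = I *ᵥ 0 := by
    rw [mulVec_cons_of_col_zero_eq_one hones, mulVec_zero]
    ext i
    have hi := congrFun hx i
    simp only [mulVecLin_apply, sub_mulVec, replicateRow_mulVec_eq_const, Pi.sub_apply,
      Function.const_apply, Pi.zero_apply] at hi
    simp only [Pi.add_apply, Function.const_apply, Pi.zero_apply]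
    linear_combination hi
  simpa using congrArg (· ∘ Fin.succ) (hI hcons)

theorem coercive_of_strong_overlap_general (p q : ℕ)
    (I : Matrix (Fin q) (Fin (p + 1)) ℝ)
    (hrank : Function.Injective I.mulVec)
    (hones : ∀ i, I i 0 = 1)
    (n0 : Fin q → ℝ) (hn0 : ∀ i, 0 < n0 i)
    (m : Fin p → ℝ)
    (lam : Fin q → ℝ) (hlam : ∀ i, 0 < lam i) (hlamsum : ∑ i, lam i = 1)
    (hlamI : ∀ j : Fin p, ∑ i, I i j.succ * lam i = m j) :
    ∀ M : ℝ, ∃ R : ℝ, ∀ β : Fin p → ℝ, R ≤ ‖β‖ →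
      M ≤ Real.log (∑ i, n0 i * Real.exp (∑ j : Fin p, I i j.succ * β j))
            - ∑ j, m j * β j := by
  intro M
  have : Nonempty (Fin q) := by
    by_contra h
    simp [not_nonempty_iff.mp h] at hlamsum
  set A := I.submatrix id Fin.succ - replicateRow (Fin q) m
  have hlamA : lam ᵥ* A = 0 := vecMul_sub_replicateRow_eq_zero hlamsum <| by
    ext j; simpa [vecMul, dotProduct, mul_comm] using hlamI j
  obtain ⟨ε, hε, hgrowth⟩ := A.mulVecLin.exists_mul_norm_le_apply_of_dotProduct_eq_zero hlam
    (fun x => by simp [dotProduct_mulVec, hlamA])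
    (injective_mulVec_submatrix_succ_sub_replicateRow hrank hones m)
  obtain ⟨c, hc⟩ := Finite.exists_ge fun i => Real.log (n0 i)
  refine ⟨(M - c) / ε, fun β hβ => ?_⟩
  obtain ⟨i, hi⟩ := hgrowth β
  have hlog := Real.log_add_le_log_sum_mul_exp hn0 (I.submatrix id Fin.succ *ᵥ β) i
  have hAβ : (A *ᵥ β) i = (I.submatrix id Fin.succ *ᵥ β) i - m ⬝ᵥ β := by
    simp [A, sub_mulVec, replicateRow_mulVec_eq_const]
  rw [div_le_iff₀ hε] at hβ
  simp only [mulVecLin_apply, hAβ] at hi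
  simp only [mulVec, dotProduct, submatrix_apply, id] at hlog hi ⊢
  linarith [hc i]

/-- Coercivity: if `m` lies in the open convex hull of the rows of `𝙸` (i.e. `𝙸ᵀ λ = m` for
some strictly positive probability vector `λ`), then
`β̃ ↦ log (∑ i, n̄⁰ i e^{(𝙸β̃) i}) − m·β̃` tends to `+∞` as `‖β̃‖ → ∞`. -/
theorem coercive_of_strong_overlap (p q : ℕ)
    (I : Matrix (Fin q) (Fin (p + 1)) ℝ)
    (hrank : Function.Injective I.mulVec)
    (hones : ∀ i, I i 0 = 1)
    (n0 : Fin q → ℝ) (hn0 : ∀ i, 0 < n0 i) (hsum : ∑ i, n0 i = 1)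
    (m : Fin p → ℝ)
    (lam : Fin q → ℝ) (hlam : ∀ i, 0 < lam i) (hlamsum : ∑ i, lam i = 1)
    (hlamI : ∀ j : Fin p, ∑ i, I i j.succ * lam i = m j) :
    ∀ M : ℝ, ∃ R : ℝ, ∀ β : Fin p → ℝ, R ≤ ‖β‖ →
      M ≤ Real.log (∑ i, n0 i * Real.exp (∑ j : Fin p, I i j.succ * β j))
            - ∑ j, m j * β j :=
  coercive_of_strong_overlap_general p q I hrank hones n0 hn0 m lam hlam hlamsum hlamI
end

section
/- Lasso path for one independent binary predictor: the solution of e^{β(t)} b/(e^{β(t)} b + 1 − b) = N̄ − t·sign(β(t)) (with β(t) = 0 for t ≥ |N̄ − b|) is β(t) = log((N̄ − t·sign(β(0)))/(1 − N̄ + t·sign(β(0)))) − log(b/(1−b)) for t ∈ [0, |N̄ − b|], where β(0) = log(N̄(1−b)/((1−N̄)b)). This path is continuous and monotone towards 0, and equals β(0) + log((1 − t·sign(β(0))/N̄)/(1 + t·sign(β(0))/(1−N̄))). -/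
/-!
Writing `logit x = log (x / (1 - x))` and `u(t) = N̄ - t s`, the path is
`β(t) = logit (u t) - logit b`. Inverting the logistic link shows that it solves the penalized
equation. As `t` runs over `[0, |N̄ - b|]`, `u t` slides monotonically from `N̄` to `b` inside
`(0, 1)`, and `logit` is increasing there, so `|β(t)| = |logit (u t) - logit b|` shrinks to `0`.
-/

open Set

noncomputable def logit (x : ℝ) : ℝ := Real.log (x / (1 - x))

section Logit

variable {x y : ℝ}

lemma logit_sub_logit (hx : x ∈ Ioo (0 : ℝ) 1) (hy : y ∈ Ioo (0 : ℝ) 1) :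
    logit x - logit y = Real.log (x * (1 - y) / ((1 - x) * y)) := by
  obtain ⟨hx0, hx1⟩ := hx
  obtain ⟨hy0, hy1⟩ := hy
  have hx1' : 1 - x ≠ 0 := by linarith
  have hy1' : 1 - y ≠ 0 := by linarith
  rw [logit, logit, ← Real.log_div (by positivity) (div_ne_zero hy0.ne' hy1')]
  congr 1
  field_simp

lemma exp_logit_sub_logit_mul_div (hx : x ∈ Ioo (0 : ℝ) 1) (hy : y ∈ Ioo (0 : ℝ) 1) :
    Real.exp (logit x - logit y) * y / (Real.exp (logit x - logit y) * y + (1 - y)) = x := by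
  rw [logit_sub_logit hx hy]
  obtain ⟨hx0, hx1⟩ := hx
  obtain ⟨hy0, hy1⟩ := hy
  have hx1' : 0 < 1 - x := by linarith
  have hy1' : 0 < 1 - y := by linarith
  rw [Real.exp_log (by positivity)]
  field_simp
  ring

lemma logit_strictMonoOn : StrictMonoOn logit (Ioo (0 : ℝ) 1) := by
  intro x ⟨hx0, hx1⟩ y ⟨_, hy1⟩ hxy
  have hx1' : 0 < 1 - x := by linarith
  have hy1' : 0 < 1 - y := by linarith
  refine Real.log_lt_log (by positivity) ?_
  rw [div_lt_div_iff₀ hx1' hy1']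
  nlinarith

lemma continuousOn_logit : ContinuousOn logit (Ioo (0 : ℝ) 1) := by
  refine ContinuousOn.log (by fun_prop (disch := intro x hx; linarith [hx.2])) ?_
  intro x ⟨hx0, hx1⟩
  exact div_ne_zero hx0.ne' (by linarith)

end Logit

lemma MonotoneOn.abs_sub_le_of_mem_uIcc {α : Type*} [LinearOrder α] {f : α → ℝ} {S : Set α}
    {a x y : α}
    (hf : MonotoneOn f S) (ha : a ∈ S) (hx : x ∈ S) (hy : y ∈ S) (hyax : y ∈ uIcc a x) :
    |f y - f a| ≤ |f x - f a| := by
  rcases le_total a x with hax | hxa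
  · rw [uIcc_of_le hax] at hyax
    have hay := hf ha hy hyax.1
    have hyx := hf hy hx hyax.2
    exact abs_le_abs (by linarith) (by linarith)
  · rw [uIcc_of_ge hxa] at hyax
    have hxy := hf hx hy hyax.1
    have hya := hf hy ha hyax.2
    exact abs_le_abs_of_nonpos (by linarith) (by linarith)

section Segment

variable {b N s t₁ t₂ : ℝ}

lemma sub_mul_mem_uIcc (hs : (s = 1 ∧ b < N) ∨ (s = -1 ∧ N < b))
    (h₁₂ : t₁ ≤ t₂) (ht₂ : t₂ ≤ |N - b|) : N - t₂ * s ∈ uIcc b (N - t₁ * s) := by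
  rcases hs with ⟨rfl, hbN⟩ | ⟨rfl, hNb⟩
  · rw [abs_of_pos (by linarith)] at ht₂
    rw [uIcc_of_le (by linarith)]
    constructor <;> linarith
  · rw [abs_of_neg (by linarith)] at ht₂
    rw [uIcc_of_ge (by linarith)]
    constructor <;> linarith

lemma sub_abs_mul_eq (hs : (s = 1 ∧ b < N) ∨ (s = -1 ∧ N < b)) : N - |N - b| * s = b := by
  rcases hs with ⟨rfl, hbN⟩ | ⟨rfl, hNb⟩
  · rw [abs_of_pos (by linarith)]; ring
  · rw [abs_of_neg (by linarith)]; ring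

end Segment

theorem lasso_path_one_predictor_general (b N s : ℝ) (hb : b ∈ Set.Ioo (0:ℝ) 1)
    (hN : N ∈ Set.Ioo (0:ℝ) 1)
    (hs : (s = 1 ∧ b < N) ∨ (s = -1 ∧ N < b))
    (β : ℝ → ℝ)
    (hβ : ∀ t, β t = Real.log ((N - t * s) / (1 - N + t * s)) - Real.log (b / (1 - b))) :
    (∀ t ∈ Set.Icc (0:ℝ) |N - b|,
        Real.exp (β t) * b / (Real.exp (β t) * b + (1 - b)) = N - t * s) ∧
    β 0 = Real.log (N * (1 - b) / ((1 - N) * b)) ∧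
    β |N - b| = 0 ∧
    ContinuousOn β (Set.Icc (0:ℝ) |N - b|) ∧
    (∀ t₁ ∈ Set.Icc (0:ℝ) |N - b|, ∀ t₂ ∈ Set.Icc (0:ℝ) |N - b|,
        t₁ ≤ t₂ → |β t₂| ≤ |β t₁|) ∧
    (∀ t ∈ Set.Icc (0:ℝ) |N - b|,
        β t = β 0 + Real.log ((1 - t * s / N) / (1 + t * s / (1 - N)))) := by
  have hβ_logit : β = fun t ↦ logit (N - t * s) - logit b := by
    funext t
    rw [hβ, logit, logit]
    congr 3
    ring
  have hu : MapsTo (fun t ↦ N - t * s) (Icc 0 |N - b|) (Ioo 0 1) := fun t ht ↦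
    ordConnected_Ioo.uIcc_subset hb hN (by simpa using sub_mul_mem_uIcc hs ht.1 ht.2)
  subst hβ_logit
  refine ⟨fun t ht ↦ exp_logit_sub_logit_mul_div (hu ht) hb, ?_, ?_, ?_, ?_, ?_⟩
  · simp only [zero_mul, sub_zero, logit_sub_logit hN hb]
  · simp only [sub_abs_mul_eq hs, sub_self]
  · exact (continuousOn_logit.comp (by fun_prop) hu).sub continuousOn_const
  · intro t₁ ht₁ t₂ ht₂ h₁₂
    exact logit_strictMonoOn.monotoneOn.abs_sub_le_of_mem_uIcc hb (hu ht₁) (hu ht₂)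
      (sub_mul_mem_uIcc hs h₁₂ ht₂.2)
  · intro t ht
    have hratio : (1 - t * s / N) / (1 + t * s / (1 - N))
        = (N - t * s) * (1 - N) / ((1 - (N - t * s)) * N) := by
      have hN1 : 1 - N ≠ 0 := by linarith [hN.2]
      rw [one_sub_div hN.1.ne', one_add_div hN1, div_div_div_eq]
      ring
    simp only [zero_mul, sub_zero, hratio, ← logit_sub_logit (hu ht) hN]
    ring

/-- Lasso path for one independent binary predictor: with `s = sign(N̄ − b)`, the path
`β(t) = log ((N̄ − t s)/(1 − N̄ + t s)) − log (b/(1−b))` solves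
`e^{β(t)} b/(e^{β(t)} b + 1 − b) = N̄ − t s` on `[0, |N̄ − b|]`, starts at
`β(0) = log (N̄(1−b)/((1−N̄)b))`, vanishes at `t = |N̄ − b|`, is continuous and monotone
towards `0`, and equals `β(0) + log ((1 − t s/N̄)/(1 + t s/(1−N̄)))`. -/
theorem lasso_path_one_predictor (b N s : ℝ) (hb : b ∈ Set.Ioo (0:ℝ) 1)
    (hN : N ∈ Set.Ioo (0:ℝ) 1) (hne : b ≠ N)
    (hs : (s = 1 ∧ b < N) ∨ (s = -1 ∧ N < b))
    (β : ℝ → ℝ)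
    (hβ : ∀ t, β t = Real.log ((N - t * s) / (1 - N + t * s)) - Real.log (b / (1 - b))) :
    (∀ t ∈ Set.Icc (0:ℝ) |N - b|,
        Real.exp (β t) * b / (Real.exp (β t) * b + (1 - b)) = N - t * s) ∧
    β 0 = Real.log (N * (1 - b) / ((1 - N) * b)) ∧
    β |N - b| = 0 ∧
    ContinuousOn β (Set.Icc (0:ℝ) |N - b|) ∧
    (∀ t₁ ∈ Set.Icc (0:ℝ) |N - b|, ∀ t₂ ∈ Set.Icc (0:ℝ) |N - b|,
        t₁ ≤ t₂ → |β t₂| ≤ |β t₁|) ∧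
    (∀ t ∈ Set.Icc (0:ℝ) |N - b|,
        β t = β 0 + Real.log ((1 - t * s / N) / (1 + t * s / (1 - N)))) :=
  lasso_path_one_predictor_general b N s hb hN hs β hβ
end
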